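/- Let {L₁,…,L_m} be linear forms in k variables over 𝔽_p, let d₁,…,d_k ≤ d < p, and let λ_{i,j} ∈ 𝔽_p. Then either for every collection of 𝔽_p-linearly independent homogeneous polynomials P₁,…,P_k on 𝔽_p^n of degrees d₁,…,d_k the polynomial Σ_{i,j} λ_{i,j} P_i(L_j(x)) is identically zero, or for every such collection it is not identically zero. That is, vanishing of Σ_{i,j} λ_{i,j} P_i(L_j(x)) depends only on the coefficients λ_{i,j}, the linear forms, and the degrees, not on the particular polynomials. -/

import Mathlib

/-!
Write `Q_i = ∑_j λ_{i,j} L_j^{d_i}`, a form of degree `d_i` in `k` variables. The sum vanishes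
identically exactly when every `Q_i` is the zero polynomial, a condition not involving the `P_i`.

If all `Q_i` vanish, then, as `d_i! ≠ 0` in `𝔽_p`, comparing coefficients in the multinomial
expansion of `L_j^{d_i}` gives `∑_j λ_{i,j} L_j^u = 0` for every monomial `u` of degree `d_i`.
Expanding `t ↦ P_i(∑_l t_l x_l)` into such monomials then kills `∑_j λ_{i,j} P_i(L_j(x))`.

Conversely, at `x_l = t_l y` homogeneity gives `∑_{i,j} λ_{i,j} P_i(L_j(x)) = ∑_i Q_i(t) P_i(y)`.
All degrees are below `p`, so a function vanishing on `𝔽_p^n` is the zero polynomial: linear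
independence of the `P_i` forces `Q_i(t) = 0` for all `t`, and hence `Q_i = 0`.
-/

open MvPolynomial Matrix Finset

namespace MvPolynomial

variable {R σ : Type*}

lemma IsHomogeneous.degree_eq_of_mem_support [CommSemiring R] {P : MvPolynomial σ R} {n : ℕ}
    (hP : P.IsHomogeneous n) {s : σ →₀ ℕ} (hs : s ∈ P.support) : s.degree = n := by
  rw [Finsupp.degree_eq_weight_one]
  exact hP (mem_support_iff.mp hs)

lemma IsHomogeneous.eval_smul [CommSemiring R] {P : MvPolynomial σ R} {n : ℕ}
    (hP : P.IsHomogeneous n) (c : R) (y : σ → R) :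
    eval (c • y) P = c ^ n * eval y P := by
  rw [eval_eq, eval_eq, Finset.mul_sum]
  refine Finset.sum_congr rfl fun s hs => ?_
  simp_rw [Pi.smul_apply, smul_eq_mul, mul_pow, Finset.prod_mul_distrib,
    Finset.prod_pow_eq_pow_sum, ← Finsupp.degree_apply, hP.degree_eq_of_mem_support hs]
  ring

lemma eq_zero_of_forall_eval_eq_zero_of_totalDegree_lt_card [CommRing R] [IsDomain R]
    [Fintype R] [Finite σ] {P : MvPolynomial σ R} (hP : P.totalDegree < Fintype.card R)
    (h : ∀ x, eval x P = 0) : P = 0 :=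
  eq_zero_of_eval_zero_at_prod_finset P (fun _ => univ)
    (fun i => (degreeOf_le_totalDegree P i).trans_lt hP) fun x _ => h x

end MvPolynomial

lemma Finsupp.isUnit_natCast_multinomial {α R : Type*} [CommSemiring R] (s : α →₀ ℕ)
    (hs : IsUnit (s.degree.factorial : R)) : IsUnit (s.multinomial : R) := by
  refine isUnit_of_mul_isUnit_right (x := ((∏ i ∈ s.support, (s i).factorial : ℕ) : R)) ?_
  rwa [← Nat.cast_mul, Finsupp.multinomial_eq, Nat.multinomial_spec, ← Finsupp.degree_apply]

namespace Matrix

variable {R ι ι' κ σ : Type*} [CommSemiring R] [Fintype κ]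

lemma toMvPolynomial_eq_sum_smul_X (L : Matrix ι' κ R) (j : ι') :
    L.toMvPolynomial j = ∑ a, L j a • X a := by
  simp only [toMvPolynomial, smul_eq_C_mul, C_mul_X_eq_monomial]

lemma coeff_toMvPolynomial_pow (L : Matrix ι' κ R) (j : ι') {s : κ →₀ ℕ} {D : ℕ}
    (hs : s.degree = D) :
    coeff s (L.toMvPolynomial j ^ D) = s.multinomial * s.prod fun a e => L j a ^ e := by
  rw [toMvPolynomial_eq_sum_smul_X, coeff_linearCombination_X_pow_of_fintype, if_pos]
  exact hs

lemma eval_vecMul_eq_eval_bind₁_transpose_toMvPolynomial (t : κ → R) (x : Matrix κ σ R)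
    (P : MvPolynomial σ R) :
    eval (t ᵥ* x) P = eval t (bind₁ xᵀ.toMvPolynomial P) := by
  rw [← aeval_eq_eval, ← aeval_eq_eval, aeval_bind₁]
  congr 2
  ext v
  rw [aeval_eq_eval, toMvPolynomial_eval_eq_apply, mulVec_transpose]

variable [Fintype ι] [Fintype ι']

lemma sum_mul_prod_pow_eq_zero_of_sum_smul_toMvPolynomial_pow_eq_zero (L : Matrix ι' κ R)
    (c : ι' → R) {D : ℕ} (hD : IsUnit (D.factorial : R))
    (h : ∑ j, c j • L.toMvPolynomial j ^ D = 0) {s : κ →₀ ℕ} (hs : s.degree = D) :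
    ∑ j, c j * s.prod (fun a e => L j a ^ e) = 0 := by
  have hcoeff := congrArg (coeff s) h
  simp_rw [coeff_sum, coeff_smul, coeff_toMvPolynomial_pow L _ hs, smul_eq_mul,
    mul_left_comm _ (s.multinomial : R), ← Finset.mul_sum, coeff_zero] at hcoeff
  exact (s.isUnit_natCast_multinomial (hs ▸ hD)).mul_right_eq_zero.mp hcoeff

lemma sum_mul_eval_eq_zero_of_sum_smul_toMvPolynomial_pow_eq_zero (L : Matrix ι' κ R)
    (c : ι' → R) {D : ℕ} (hD : IsUnit (D.factorial : R))
    (h : ∑ j, c j • L.toMvPolynomial j ^ D = 0) {g : MvPolynomial κ R}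
    (hg : g.IsHomogeneous D) :
    ∑ j, c j * eval (L j) g = 0 := by
  simp_rw [eval_eq, Finset.mul_sum]
  rw [Finset.sum_comm]
  refine Finset.sum_eq_zero fun s hs => ?_
  have hpow := sum_mul_prod_pow_eq_zero_of_sum_smul_toMvPolynomial_pow_eq_zero L c hD h
    (hg.degree_eq_of_mem_support hs)
  rw [← mul_zero (coeff s g), ← hpow, Finset.mul_sum]
  exact Finset.sum_congr rfl fun j _ => by simp only [Finsupp.prod]; ring

theorem sum_sum_mul_eval_vecMul_eq_zero (L : Matrix ι' κ R) (lam : ι → ι' → R)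
    {P : ι → MvPolynomial σ R} {D : ι → ℕ} (hP : ∀ i, (P i).IsHomogeneous (D i))
    (hD : ∀ i, IsUnit ((D i).factorial : R))
    (h : ∀ i, ∑ j, lam i j • L.toMvPolynomial j ^ D i = 0) (x : Matrix κ σ R) :
    ∑ i, ∑ j, lam i j * eval (L j ᵥ* x) (P i) = 0 := by
  refine Finset.sum_eq_zero fun i _ => ?_
  simp_rw [eval_vecMul_eq_eval_bind₁_transpose_toMvPolynomial]
  have hg := (hP i).aeval xᵀ.toMvPolynomial (toMvPolynomial_isHomogeneous xᵀ)
  rw [one_mul] at hg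
  exact L.sum_mul_eval_eq_zero_of_sum_smul_toMvPolynomial_pow_eq_zero _ (hD i) (h i) hg

lemma sum_sum_mul_eval_vecMul_vecMulVec (L : Matrix ι' κ R) (lam : ι → ι' → R)
    {P : ι → MvPolynomial σ R} {D : ι → ℕ} (hP : ∀ i, (P i).IsHomogeneous (D i))
    (t : κ → R) (y : σ → R) :
    ∑ i, ∑ j, lam i j * eval (L j ᵥ* vecMulVec t y) (P i) =
      eval y (∑ i, eval t (∑ j, lam i j • L.toMvPolynomial j ^ D i) • P i) := by
  simp only [vecMul_vecMulVec, (hP _).eval_smul, map_sum, smul_eval, map_pow,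
    toMvPolynomial_eval_eq_apply, Finset.sum_mul, mul_assoc]
  rfl

theorem sum_smul_toMvPolynomial_pow_eq_zero_of_sum_sum_eq_zero
    {F : Type*} [Field F] [Fintype F] [Finite σ] (L : Matrix ι' κ F) (lam : ι → ι' → F)
    {P : ι → MvPolynomial σ F} {D : ι → ℕ} {d : ℕ} (hP : ∀ i, (P i).IsHomogeneous (D i))
    (hD : ∀ i, D i ≤ d) (hd : d < Fintype.card F) (hind : LinearIndependent F P)
    (h : ∀ x : Matrix κ σ F, ∑ i, ∑ j, lam i j * eval (L j ᵥ* x) (P i) = 0) (i : ι) :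
    ∑ j, lam i j • L.toMvPolynomial j ^ D i = 0 := by
  have hcomb (t : κ → F) : ∑ i, eval t (∑ j, lam i j • L.toMvPolynomial j ^ D i) • P i = 0 := by
    refine eq_zero_of_forall_eval_eq_zero_of_totalDegree_lt_card ?_ fun y => ?_
    · refine (totalDegree_finsetSum_le fun i _ => ?_).trans_lt hd
      exact (totalDegree_smul_le _ _).trans ((hP i).totalDegree_le.trans (hD i))
    · rw [← sum_sum_mul_eval_vecMul_vecMulVec L lam hP]
      exact h _
  refine eq_zero_of_forall_eval_eq_zero_of_totalDegree_lt_card ?_ fun t =>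
    Fintype.linearIndependent_iff.mp hind _ (hcomb t) i
  refine (totalDegree_finsetSum_le fun j _ => ?_).trans_lt ((hD i).trans_lt hd)
  refine (totalDegree_smul_le _ _).trans ?_
  simpa using ((L.toMvPolynomial_isHomogeneous j).pow (D i)).totalDegree_le

end Matrix

/-- Whether `∑_{i,j} λ_{i,j} P_i(L_j(x))` vanishes identically depends only on the
coefficients `λ`, the linear forms `L_j` and the degrees `d_i` of the linearly
independent homogeneous polynomials `P_i`, not on the polynomials themselves: either
every such collection gives the zero function, or none does. -/
theorem vanishing_depends_only_on_degrees {p n k m K d : ℕ} [Fact p.Prime] (hd : d < p)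
    (L : Fin m → Fin k → ZMod p) (D : Fin K → ℕ) (hD : ∀ i, D i ≤ d)
    (lam : Fin K → Fin m → ZMod p) :
    (∀ P : Fin K → MvPolynomial (Fin n) (ZMod p),
        (∀ i, (P i).IsHomogeneous (D i)) → LinearIndependent (ZMod p) P →
        ∀ x : Fin k → Fin n → ZMod p,
          (∑ i : Fin K, ∑ j : Fin m,
            lam i j * MvPolynomial.eval
              (fun v : Fin n => ∑ j' : Fin k, L j j' * x j' v) (P i)) = 0) ∨
    (∀ P : Fin K → MvPolynomial (Fin n) (ZMod p),
        (∀ i, (P i).IsHomogeneous (D i)) → LinearIndependent (ZMod p) P →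
        ¬ ∀ x : Fin k → Fin n → ZMod p,
          (∑ i : Fin K, ∑ j : Fin m,
            lam i j * MvPolynomial.eval
              (fun v : Fin n => ∑ j' : Fin k, L j j' * x j' v) (P i)) = 0) := by
  have hfact (i : Fin K) : IsUnit ((D i).factorial : ZMod p) :=
    (IsUnit.natCast_factorial_iff_of_charP p).mpr ((hD i).trans_lt hd)
  by_cases hQ : ∀ i, ∑ j, lam i j • Matrix.toMvPolynomial L j ^ D i = 0
  · exact Or.inl fun P hP _ x => Matrix.sum_sum_mul_eval_vecMul_eq_zero L lam hP hfact hQ x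
  · refine Or.inr fun P hP hind hvan => hQ ?_
    exact Matrix.sum_smul_toMvPolynomial_pow_eq_zero_of_sum_sum_eq_zero L lam hP hD
      (by rwa [ZMod.card]) hind hvan
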